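/- The Dynin-Folland Lie algebra 𝔥_{1,2} admits a stratification 𝔤_1 ⊕ 𝔤_2 ⊕ 𝔤_3 with 𝔤_1 = span(Y₃, X₂, X₁), 𝔤_2 = span(Y₁, Y₂, X₃), 𝔤_3 = ℝZ, satisfying [𝔤_1, 𝔤_1] = 𝔤_2 and [𝔤_1, 𝔤_2] = 𝔤_3 and [𝔤_1, 𝔤_3] = 0. -/
import Mathlib


/-- The Dynin-Folland bracket on `ℝ⁷` with basis ordering
`(Z, Y₁, Y₂, Y₃, X₃, X₂, X₁)` (indices `0,…,6`). -/
noncomputable def dfBr (u v : Fin 7 → ℝ) : Fin 7 → ℝ :=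
  ![-(u 1 * v 6 - u 6 * v 1) - (u 2 * v 5 - u 5 * v 2) - (u 3 * v 4 - u 4 * v 3),
    -(1 / 2) * (u 3 * v 5 - u 5 * v 3),
    (1 / 2) * (u 3 * v 6 - u 6 * v 3),
    0,
    -(u 5 * v 6 - u 6 * v 5),
    0,
    0]

/-- `𝔤₁ = span(Y₃, X₂, X₁)`. -/
noncomputable def dfG1 : Submodule ℝ (Fin 7 → ℝ) :=
  Submodule.span ℝ {Pi.single 3 1, Pi.single 5 1, Pi.single 6 1}

/-- `𝔤₂ = span(Y₁, Y₂, X₃)`. -/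
noncomputable def dfG2 : Submodule ℝ (Fin 7 → ℝ) :=
  Submodule.span ℝ {Pi.single 1 1, Pi.single 2 1, Pi.single 4 1}

/-- `𝔤₃ = ℝ Z`. -/
noncomputable def dfG3 : Submodule ℝ (Fin 7 → ℝ) :=
  Submodule.span ℝ {Pi.single 0 1}

open Submodule

lemma fin7_5 : (5 : Fin 7) = (4 : Fin 6).succ := rfl
lemma fin7_6 : (6 : Fin 7) = (5 : Fin 6).succ := rfl
lemma fin6_5 : (5 : Fin 6) = (4 : Fin 5).succ := rfl

lemma sing0 : (Pi.single 0 1 : Fin 7 → ℝ) = ![1,0,0,0,0,0,0] := by funext i; fin_cases i <;> rfl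
lemma sing1 : (Pi.single 1 1 : Fin 7 → ℝ) = ![0,1,0,0,0,0,0] := by funext i; fin_cases i <;> rfl
lemma sing2 : (Pi.single 2 1 : Fin 7 → ℝ) = ![0,0,1,0,0,0,0] := by funext i; fin_cases i <;> rfl
lemma sing3 : (Pi.single 3 1 : Fin 7 → ℝ) = ![0,0,0,1,0,0,0] := by funext i; fin_cases i <;> rfl
lemma sing4 : (Pi.single 4 1 : Fin 7 → ℝ) = ![0,0,0,0,1,0,0] := by funext i; fin_cases i <;> rfl
lemma sing5 : (Pi.single 5 1 : Fin 7 → ℝ) = ![0,0,0,0,0,1,0] := by funext i; fin_cases i <;> rfl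
lemma sing6 : (Pi.single 6 1 : Fin 7 → ℝ) = ![0,0,0,0,0,0,1] := by funext i; fin_cases i <;> rfl

lemma dfG1_mem_iff (x : Fin 7 → ℝ) :
    x ∈ dfG1 ↔ x 0 = 0 ∧ x 1 = 0 ∧ x 2 = 0 ∧ x 4 = 0 := by
  constructor
  · intro hx
    induction hx using Submodule.span_induction with
    | mem y hy =>
      simp only [Set.mem_insert_iff, Set.mem_singleton_iff] at hy
      rcases hy with rfl | rfl | rfl <;> refine ⟨?_, ?_, ?_, ?_⟩ <;>
        simp [Pi.single_apply] <;> decide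
    | zero => simp
    | add y z _ _ hy hz => simp_all
    | smul r y _ hy => simp_all
  · rintro ⟨h0, h1, h2, h4⟩
    have hx : x = x 3 • (Pi.single 3 1 : Fin 7 → ℝ) + x 5 • (Pi.single 5 1 : Fin 7 → ℝ)
        + x 6 • (Pi.single 6 1 : Fin 7 → ℝ) := by
      funext i
      fin_cases i <;> simp [Pi.single_apply, h0, h1, h2, h4] <;> (first | decide | norm_num)
    rw [hx]
    refine add_mem (add_mem ?_ ?_) ?_ <;>
      exact smul_mem _ _ (subset_span (by simp))

lemma dfG2_mem_iff (x : Fin 7 → ℝ) :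
    x ∈ dfG2 ↔ x 0 = 0 ∧ x 3 = 0 ∧ x 5 = 0 ∧ x 6 = 0 := by
  constructor
  · intro hx
    induction hx using Submodule.span_induction with
    | mem y hy =>
      simp only [Set.mem_insert_iff, Set.mem_singleton_iff] at hy
      rcases hy with rfl | rfl | rfl <;> refine ⟨?_, ?_, ?_, ?_⟩ <;>
        simp [Pi.single_apply] <;> decide
    | zero => simp
    | add y z _ _ hy hz => simp_all
    | smul r y _ hy => simp_all
  · rintro ⟨h0, h3, h5, h6⟩
    have hx : x = x 1 • (Pi.single 1 1 : Fin 7 → ℝ) + x 2 • (Pi.single 2 1 : Fin 7 → ℝ)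
        + x 4 • (Pi.single 4 1 : Fin 7 → ℝ) := by
      funext i
      fin_cases i <;> simp [Pi.single_apply, h0, h3, h5, h6] <;> (first | decide | norm_num)
    rw [hx]
    refine add_mem (add_mem ?_ ?_) ?_ <;>
      exact smul_mem _ _ (subset_span (by simp))

lemma dfG3_mem_iff (x : Fin 7 → ℝ) :
    x ∈ dfG3 ↔ x 1 = 0 ∧ x 2 = 0 ∧ x 3 = 0 ∧ x 4 = 0 ∧ x 5 = 0 ∧ x 6 = 0 := by
  constructor
  · intro hx
    induction hx using Submodule.span_induction with
    | mem y hy =>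
      simp only [Set.mem_singleton_iff] at hy
      subst hy
      refine ⟨?_, ?_, ?_, ?_, ?_, ?_⟩ <;> simp [Pi.single_apply] <;> decide
    | zero => simp
    | add y z _ _ hy hz => simp_all
    | smul r y _ hy => simp_all
  · rintro ⟨h1, h2, h3, h4, h5, h6⟩
    have hx : x = x 0 • (Pi.single 0 1 : Fin 7 → ℝ) := by
      funext i
      fin_cases i <;> simp [Pi.single_apply, h1, h2, h3, h4, h5, h6] <;>
        (first | decide | norm_num)
    rw [hx]
    exact smul_mem _ _ (subset_span (by simp))

/-- The Dynin-Folland algebra `𝔥_{1,2}` is stratified: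
`𝔥_{1,2} = 𝔤₁ ⊕ 𝔤₂ ⊕ 𝔤₃`, with `[𝔤₁,𝔤₁] = 𝔤₂`, `[𝔤₁,𝔤₂] = 𝔤₃`,
`[𝔤₁,𝔤₃] = 0`. -/
theorem df_stratified :
    dfG1 ⊔ dfG2 ⊔ dfG3 = ⊤ ∧
    dfG1 ⊓ (dfG2 ⊔ dfG3) = ⊥ ∧ dfG2 ⊓ dfG3 = ⊥ ∧
    Submodule.span ℝ {x | ∃ u ∈ dfG1, ∃ v ∈ dfG1, x = dfBr u v} = dfG2 ∧
    Submodule.span ℝ {x | ∃ u ∈ dfG1, ∃ v ∈ dfG2, x = dfBr u v} = dfG3 ∧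
    (∀ u ∈ dfG1, ∀ v ∈ dfG3, dfBr u v = 0) := by
  have m3 : (Pi.single 3 1 : Fin 7 → ℝ) ∈ dfG1 := subset_span (by simp)
  have m5 : (Pi.single 5 1 : Fin 7 → ℝ) ∈ dfG1 := subset_span (by simp)
  have m6 : (Pi.single 6 1 : Fin 7 → ℝ) ∈ dfG1 := subset_span (by simp)
  have m4 : (Pi.single 4 1 : Fin 7 → ℝ) ∈ dfG2 := subset_span (by simp)
  refine ⟨?_, ?_, ?_, ?_, ?_, ?_⟩
  · -- sup = ⊤
    rw [eq_top_iff]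
    intro x _
    have hx : x = (x 3 • (Pi.single 3 1 : Fin 7 → ℝ) + x 5 • (Pi.single 5 1 : Fin 7 → ℝ)
          + x 6 • (Pi.single 6 1 : Fin 7 → ℝ))
        + (x 1 • (Pi.single 1 1 : Fin 7 → ℝ) + x 2 • (Pi.single 2 1 : Fin 7 → ℝ)
          + x 4 • (Pi.single 4 1 : Fin 7 → ℝ))
        + x 0 • (Pi.single 0 1 : Fin 7 → ℝ) := by
      funext i
      fin_cases i <;> simp [Pi.single_apply] <;> (first | decide | norm_num)
    rw [hx]
    refine add_mem (add_mem ?_ ?_) ?_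
    · exact mem_sup_left (mem_sup_left
        (add_mem (add_mem (smul_mem _ _ m3) (smul_mem _ _ m5)) (smul_mem _ _ m6)))
    · refine mem_sup_left (mem_sup_right
        (add_mem (add_mem (smul_mem _ _ ?_) (smul_mem _ _ ?_)) (smul_mem _ _ m4))) <;>
        exact subset_span (by simp)
    · exact mem_sup_right (smul_mem _ _ (subset_span (by simp)))
  · -- G1 ⊓ (G2 ⊔ G3) = ⊥
    rw [eq_bot_iff]
    rintro x ⟨hx1, hx23⟩
    rcases mem_sup.1 hx23 with ⟨y, hy, z, hz, rfl⟩
    obtain ⟨h0, h1, h2, h4⟩ := (dfG1_mem_iff _).1 hx1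
    obtain ⟨y0, y3, y5, y6⟩ := (dfG2_mem_iff _).1 hy
    obtain ⟨z1, z2, z3, z4, z5, z6⟩ := (dfG3_mem_iff _).1 hz
    simp only [Pi.add_apply] at h0 h1 h2 h4
    have hyz : y + z = 0 := by
      funext i
      fin_cases i <;>
        simp only [Pi.add_apply, Pi.zero_apply, Fin.isValue, Fin.mk_one] <;>
        first
        | (show y 0 + z 0 = 0; linarith)
        | (show y 1 + z 1 = 0; linarith)
        | (show y 2 + z 2 = 0; linarith)
        | (show y 3 + z 3 = 0; linarith)
        | (show y 4 + z 4 = 0; linarith)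
        | (show y 5 + z 5 = 0; linarith)
        | (show y 6 + z 6 = 0; linarith)
    simp [hyz]
  · -- G2 ⊓ G3 = ⊥
    rw [eq_bot_iff]
    rintro x ⟨hx2, hx3⟩
    obtain ⟨y0, y3, y5, y6⟩ := (dfG2_mem_iff _).1 hx2
    obtain ⟨z1, z2, z3, z4, z5, z6⟩ := (dfG3_mem_iff _).1 hx3
    have hx : x = 0 := by
      funext i
      fin_cases i <;>
        first
        | (show x 0 = 0; linarith)
        | (show x 1 = 0; linarith)
        | (show x 2 = 0; linarith)
        | (show x 3 = 0; linarith)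
        | (show x 4 = 0; linarith)
        | (show x 5 = 0; linarith)
        | (show x 6 = 0; linarith)
    simp [hx]
  · -- [G1,G1] = G2
    apply le_antisymm
    · rw [span_le]
      rintro x ⟨u, hu, v, hv, rfl⟩
      obtain ⟨u0, u1, u2, u4⟩ := (dfG1_mem_iff _).1 hu
      obtain ⟨v0, v1, v2, v4⟩ := (dfG1_mem_iff _).1 hv
      rw [SetLike.mem_coe, dfG2_mem_iff]
      refine ⟨?_, ?_, ?_, ?_⟩ <;> (first | rfl | simp [dfBr, u1, u2, u4, v1, v2, v4])
    · rw [dfG2, span_le]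
      have h15 : dfBr (Pi.single 3 1) (Pi.single 5 1) ∈
          Submodule.span ℝ {x | ∃ u ∈ dfG1, ∃ v ∈ dfG1, x = dfBr u v} :=
        subset_span ⟨_, m3, _, m5, rfl⟩
      have h16 : dfBr (Pi.single 3 1) (Pi.single 6 1) ∈
          Submodule.span ℝ {x | ∃ u ∈ dfG1, ∃ v ∈ dfG1, x = dfBr u v} :=
        subset_span ⟨_, m3, _, m6, rfl⟩
      have h56 : dfBr (Pi.single 5 1) (Pi.single 6 1) ∈
          Submodule.span ℝ {x | ∃ u ∈ dfG1, ∃ v ∈ dfG1, x = dfBr u v} :=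
        subset_span ⟨_, m5, _, m6, rfl⟩
      rintro y hy
      simp only [Set.mem_insert_iff, Set.mem_singleton_iff] at hy
      rcases hy with rfl | rfl | rfl
      · have h : (Pi.single 1 1 : Fin 7 → ℝ) =
            (-2 : ℝ) • dfBr (Pi.single 3 1) (Pi.single 5 1) := by
          rw [sing1, sing3, sing5]
          funext i
          fin_cases i <;>
            simp [dfBr, fin7_5, fin7_6, fin6_5, Matrix.cons_val_succ] <;> norm_num
        rw [h]; exact smul_mem _ _ h15
      · have h : (Pi.single 2 1 : Fin 7 → ℝ) =
            (2 : ℝ) • dfBr (Pi.single 3 1) (Pi.single 6 1) := by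
          rw [sing2, sing3, sing6]
          funext i
          fin_cases i <;>
            simp [dfBr, fin7_5, fin7_6, fin6_5, Matrix.cons_val_succ] <;> norm_num
        rw [h]; exact smul_mem _ _ h16
      · have h : (Pi.single 4 1 : Fin 7 → ℝ) =
            (-1 : ℝ) • dfBr (Pi.single 5 1) (Pi.single 6 1) := by
          rw [sing4, sing5, sing6]
          funext i
          fin_cases i <;>
            simp [dfBr, fin7_5, fin7_6, fin6_5, Matrix.cons_val_succ] <;> norm_num
        rw [h]; exact smul_mem _ _ h56
  · -- [G1,G2] = G3
    apply le_antisymm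
    · rw [span_le]
      rintro x ⟨u, hu, v, hv, rfl⟩
      obtain ⟨u0, u1, u2, u4⟩ := (dfG1_mem_iff _).1 hu
      obtain ⟨v0, v3, v5, v6⟩ := (dfG2_mem_iff _).1 hv
      rw [SetLike.mem_coe, dfG3_mem_iff]
      refine ⟨?_, ?_, ?_, ?_, ?_, ?_⟩ <;> (first | rfl | simp [dfBr, u1, u2, u4, v3, v5, v6])
    · rw [dfG3, span_le]
      rintro y hy
      simp only [Set.mem_singleton_iff] at hy
      subst hy
      have h34 : dfBr (Pi.single 3 1) (Pi.single 4 1) ∈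
          Submodule.span ℝ {x | ∃ u ∈ dfG1, ∃ v ∈ dfG2, x = dfBr u v} :=
        subset_span ⟨_, m3, _, m4, rfl⟩
      have h : (Pi.single 0 1 : Fin 7 → ℝ) =
          (-1 : ℝ) • dfBr (Pi.single 3 1) (Pi.single 4 1) := by
        rw [sing0, sing3, sing4]
        funext i
        fin_cases i <;>
          simp [dfBr, fin7_5, fin7_6, fin6_5, Matrix.cons_val_succ] <;> norm_num
      rw [h]; exact smul_mem _ _ h34
  · -- [G1,G3] = 0
    intro u _ v hv
    obtain ⟨v1, v2, v3, v4, v5, v6⟩ := (dfG3_mem_iff _).1 hv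
    funext i
    fin_cases i <;> (first | rfl | simp [dfBr, v1, v2, v3, v4, v5, v6])
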